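/- Fix d ≥ 1, a nonzero vector μ ∈ ℝ^d, σ > 0, p ∈ (1/2, 1), and t > 2; set q = 1 − 1/t. Let D_p be the distribution on ℝ^d × {−1,+1} where Y is uniform on {−1,+1}, X given Y=+1 is N(μ, σ²I), and X given Y=−1 is the mixture p·N(−μ, σ²I) + (1−p)·N(3μ, σ²I). Let h^MDA_q be the classifier that outputs +1 iff f(x; μ, σ²I) ≥ q·f(x; −μ, σ²I) and f(x; μ, σ²I) ≥ (1−q)·f(x; 3μ, σ²I), where f(·; m, σ²I) is the N(m, σ²I) density (the ideal MDA classifier built with mixture weight q instead of p). Then, with ν = ‖μ‖/σ, 2·Pr_{(X,Y)∼D_p}[h^MDA_q(X) ≠ Y] ≤ Φ(−ν + ln(1−1/t)/(2ν)) + Φ(−ν − ln t/(2ν)) + p·Φ(−ν − ln(1−1/t)/(2ν)) + (1−p)·Φ(−ν + ln t/(2ν)). -/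

import Mathlib

open MeasureTheory Real Set ProbabilityTheory
open scoped ENNReal RealInnerProductSpace

/-- The standard normal cumulative distribution function
`Φ(z) = ∫_{−∞}^z (1/√(2π)) e^{−u²/2} du`. -/
noncomputable def stdNormCDF (z : ℝ) : ℝ :=
  ∫ u in Set.Iic z, (1 / Real.sqrt (2 * Real.pi)) * Real.exp (-u ^ 2 / 2)
/-- Density of the `d`-dimensional Gaussian `N(m, σ²I)`:
`f(x; m, σ²I) = (2πσ²)^{−d/2} exp(−‖x−m‖²/(2σ²))`. -/
noncomputable def gaussPdf (d : ℕ) (m : EuclideanSpace ℝ (Fin d)) (σ : ℝ)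
    (x : EuclideanSpace ℝ (Fin d)) : ℝ :=
  (2 * Real.pi * σ ^ 2) ^ (-(d : ℝ) / 2) * Real.exp (-‖x - m‖ ^ 2 / (2 * σ ^ 2))

/-- The `d`-dimensional Gaussian measure `N(m, σ²I)` on `ℝ^d`. -/
noncomputable def gauss (d : ℕ) (m : EuclideanSpace ℝ (Fin d)) (σ : ℝ) :
    Measure (EuclideanSpace ℝ (Fin d)) :=
  volume.withDensity fun x => ENNReal.ofReal (gaussPdf d m σ x)
/-- The data-generating distribution `D` on `ℝ^d × {−1,+1}` (labels embedded in `ℝ`):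
`Y` is uniform on `{−1,+1}`, `X | Y=+1 ∼ N(μ, σ²I)`, and
`X | Y=−1 ∼ p·N(−μ, σ²I) + (1−p)·N(3μ, σ²I)`. -/
noncomputable def Dmix (d : ℕ) (μv : EuclideanSpace ℝ (Fin d)) (σ p : ℝ) :
    Measure (EuclideanSpace ℝ (Fin d) × ℝ) :=
  ENNReal.ofReal (1 / 2) • (gauss d μv σ).map (fun x => (x, (1 : ℝ)))
    + ENNReal.ofReal (p / 2) • (gauss d (-μv) σ).map (fun x => (x, (-1 : ℝ)))
    + ENNReal.ofReal ((1 - p) / 2) • (gauss d ((3 : ℝ) • μv) σ).map (fun x => (x, (-1 : ℝ)))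
/-- The MDA classifier: outputs `+1` iff `f(x; μ, σ²I) ≥ p·f(x; −μ, σ²I)` and
`f(x; μ, σ²I) ≥ (1−p)·f(x; 3μ, σ²I)`. -/
noncomputable def hMDA (d : ℕ) (μv : EuclideanSpace ℝ (Fin d)) (σ p : ℝ)
    (x : EuclideanSpace ℝ (Fin d)) : ℝ :=
  if p * gaussPdf d (-μv) σ x ≤ gaussPdf d μv σ x ∧
      (1 - p) * gaussPdf d ((3 : ℝ) • μv) σ x ≤ gaussPdf d μv σ x then 1 else -1

/-!
Both likelihood-ratio tests defining `hMDA` are affine in `⟪x, μ⟫`, so the classifier trained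
with weight `q` predicts `+1` exactly on the slab
`σ² log q / 2 ≤ ⟪x, μ⟫ ≤ 2‖μ‖² - σ² log (1 - q) / 2`. Each of the three error events is then
contained in one or two half-spaces orthogonal to `μ`, and `N(m, σ²I)` gives the half-space
`⟪x, w⟫ ≤ c` mass `Φ((c - ⟪m, w⟫) / (σ‖w‖))`, because `⟪X, w⟫ ∼ N(⟪m, w⟫, σ²‖w‖²)`: in an
orthonormal basis whose first vector is `w / ‖w‖` the density factorises into one-dimensional
Gaussian densities. With `q = 1 - 1/t` one has `log (1 - q) = -log t`.
-/

lemma ofReal_stdNormCDF_eq_gaussianReal_Iic (z : ℝ) :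
    ENNReal.ofReal (stdNormCDF z) = gaussianReal 0 1 (Iic z) := by
  rw [gaussianReal_apply_eq_integral 0 one_ne_zero, stdNormCDF]
  congr 1
  refine setIntegral_congr_fun measurableSet_Iic fun u _ => ?_
  simp [gaussianPDFReal, one_div]

lemma gaussianReal_Iic_eq_ofReal_stdNormCDF {s : ℝ} (hs : 0 < s) (a c : ℝ) :
    gaussianReal a (s ^ 2).toNNReal (Iic c) = ENNReal.ofReal (stdNormCDF ((c - a) / s)) := by
  have hstd : (gaussianReal a (s ^ 2).toNNReal).map ((· / s) ∘ (· - a)) = gaussianReal 0 1 := by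
    rw [← Measure.map_map (by fun_prop) (by fun_prop), gaussianReal_map_sub_const,
      gaussianReal_map_div_const, sub_self, zero_div]
    congr 1
    ext
    simp [div_self (pow_pos hs 2).ne', sq_nonneg s]
  have hpre : (· / s) ∘ (· - a) ⁻¹' Iic ((c - a) / s) = Iic c := by
    ext x
    simp [div_le_div_iff_of_pos_right hs]
  rw [ofReal_stdNormCDF_eq_gaussianReal_Iic, ← hstd,
    Measure.map_apply (by fun_prop) measurableSet_Iic, hpre]

lemma stdNormCDF_nonneg (z : ℝ) : 0 ≤ stdNormCDF z :=
  setIntegral_nonneg measurableSet_Iic fun _ _ => by positivity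

lemma two_mul_toReal_le_of_le_mix {e : ℝ≥0∞} {x₁ x₂ x₃ x₄ p : ℝ} (h₁ : 0 ≤ x₁) (h₂ : 0 ≤ x₂)
    (h₃ : 0 ≤ x₃) (h₄ : 0 ≤ x₄) (hp₀ : 0 ≤ p) (hp₁ : p ≤ 1)
    (he : e ≤ ENNReal.ofReal (1 / 2) * (ENNReal.ofReal x₁ + ENNReal.ofReal x₂)
      + ENNReal.ofReal (p / 2) * ENNReal.ofReal x₃
      + ENNReal.ofReal ((1 - p) / 2) * ENNReal.ofReal x₄) :
    2 * e.toReal ≤ x₁ + x₂ + p * x₃ + (1 - p) * x₄ := by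
  have hp₁' : 0 ≤ 1 - p := sub_nonneg.mpr hp₁
  rw [← ENNReal.ofReal_add h₁ h₂, ← ENNReal.ofReal_mul (by norm_num),
    ← ENNReal.ofReal_mul (by positivity), ← ENNReal.ofReal_mul (by positivity),
    ← ENNReal.ofReal_add (by positivity) (by positivity),
    ← ENNReal.ofReal_add (by positivity) (by positivity)] at he
  linarith [ENNReal.toReal_le_of_le_ofReal (by positivity) he]

section OrthonormalBasis

variable {ι E : Type*} [Fintype ι] [NormedAddCommGroup E] [InnerProductSpace ℝ E]

lemma OrthonormalBasis.exists_apply_eq [FiniteDimensional ℝ E]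
    (hcard : Module.finrank ℝ E = Fintype.card ι) {u : E} (hu : ‖u‖ = 1) (i : ι) :
    ∃ b : OrthonormalBasis ι ℝ E, b i = u := by
  have horth : Orthonormal ℝ (({i} : Set ι).domRestrict fun _ => u) :=
    ⟨fun _ => hu, fun j k hjk => absurd (Subtype.ext (j.2.trans k.2.symm)) hjk⟩
  obtain ⟨b, hb⟩ := horth.exists_orthonormalBasis_extension_of_card_eq hcard
  exact ⟨b, hb i rfl⟩

variable [MeasurableSpace E] [BorelSpace E]

lemma OrthonormalBasis.measurableEmbedding_repr_symm_toLp (b : OrthonormalBasis ι ℝ E) :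
    MeasurableEmbedding (fun y : ι → ℝ => b.repr.symm (WithLp.toLp 2 y)) :=
  b.measurableEquiv.symm.measurableEmbedding.comp
    (MeasurableEquiv.toLp 2 (ι → ℝ)).measurableEmbedding

lemma OrthonormalBasis.measurePreserving_repr_symm_toLp [FiniteDimensional ℝ E]
    (b : OrthonormalBasis ι ℝ E) :
    MeasurePreserving (fun y : ι → ℝ => b.repr.symm (WithLp.toLp 2 y)) :=
  b.measurePreserving_repr_symm.comp (PiLp.volume_preserving_toLp ι)

end OrthonormalBasis

section

variable {d : ℕ}

lemma gaussPdf_repr_symm (b : OrthonormalBasis (Fin d) ℝ (EuclideanSpace ℝ (Fin d)))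
    (m : EuclideanSpace ℝ (Fin d)) (σ : ℝ) (y : Fin d → ℝ) :
    gaussPdf d m σ (b.repr.symm (WithLp.toLp 2 y))
      = ∏ i, gaussianPDFReal (b.repr m i) (σ ^ 2).toNNReal (y i) := by
  have hnorm : ‖b.repr.symm (WithLp.toLp 2 y) - m‖ ^ 2 = ∑ i, (y i - b.repr m i) ^ 2 := by
    rw [← b.repr.norm_map, map_sub, LinearIsometryEquiv.apply_symm_apply,
      EuclideanSpace.real_norm_sq_eq]
    simp
  have hB : 0 ≤ 2 * π * σ ^ 2 := by positivity
  simp only [gaussPdf, gaussianPDFReal, Real.coe_toNNReal _ (sq_nonneg σ),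
    Finset.prod_mul_distrib, Finset.prod_const, Finset.card_univ, Fintype.card_fin,
    ← Real.exp_sum, hnorm]
  congr 1
  · rw [Real.sqrt_eq_rpow, ← Real.rpow_neg hB, ← Real.rpow_natCast _ d, ← Real.rpow_mul hB]
    ring_nf
  · rw [← Finset.sum_div, ← Finset.sum_neg_distrib]

lemma integrable_gaussPdf (m : EuclideanSpace ℝ (Fin d)) (σ : ℝ) :
    Integrable (gaussPdf d m σ) := by
  let b := EuclideanSpace.basisFun (Fin d) ℝ
  refine (b.measurePreserving_repr_symm_toLp.integrable_comp_emb
    b.measurableEmbedding_repr_symm_toLp).mp ?_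
  simp only [Function.comp_def, gaussPdf_repr_symm]
  exact Integrable.fintype_prod fun i => integrable_gaussianPDFReal _ _

lemma gauss_apply_eq_integral (m : EuclideanSpace ℝ (Fin d)) (σ : ℝ)
    (S : Set (EuclideanSpace ℝ (Fin d))) :
    gauss d m σ S = ENNReal.ofReal (∫ x in S, gaussPdf d m σ x) := by
  rw [gauss, withDensity_apply' _ S, ofReal_integral_eq_lintegral_ofReal
    (integrable_gaussPdf m σ).integrableOn (ae_of_all _ fun x => by unfold gaussPdf; positivity)]

lemma gauss_map_repr (b : OrthonormalBasis (Fin d) ℝ (EuclideanSpace ℝ (Fin d)))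
    (m : EuclideanSpace ℝ (Fin d)) {σ : ℝ} (hσ : σ ≠ 0) (i₀ : Fin d) :
    (gauss d m σ).map (fun x => b.repr x i₀) = gaussianReal (b.repr m i₀) (σ ^ 2).toNNReal := by
  have hv : (σ ^ 2).toNNReal ≠ 0 := by simpa using hσ
  set f := fun i => gaussianPDFReal (b.repr m i) (σ ^ 2).toNNReal
  ext s hs
  set S := (fun x => b.repr x i₀) ⁻¹' s
  have hS : MeasurableSet S := measurableSet_preimage (by fun_prop) hs
  -- in orthonormal coordinates the density is a product, and only its `i₀`-th factor sees `s`
  have hfactor : ∀ y, S.indicator (gaussPdf d m σ) (b.repr.symm (WithLp.toLp 2 y))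
      = ∏ i, Function.update f i₀ (s.indicator (f i₀)) i (y i) := by
    intro y
    by_cases hy : y i₀ ∈ s
    · rw [indicator_of_mem (by simpa [S] using hy), gaussPdf_repr_symm]
      refine Finset.prod_congr rfl fun i _ => ?_
      rcases eq_or_ne i i₀ with rfl | hi
      · rw [Function.update_self, indicator_of_mem hy]
      · rw [Function.update_of_ne hi]
    · rw [indicator_of_notMem (by simpa [S] using hy)]
      refine (Finset.prod_eq_zero (Finset.mem_univ i₀) ?_).symm
      rw [Function.update_self, indicator_of_notMem hy]
  rw [Measure.map_apply (by fun_prop) hs, gaussianReal_apply_eq_integral _ hv,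
    gauss_apply_eq_integral, ← integral_indicator hS,
    ← b.measurePreserving_repr_symm_toLp.integral_comp b.measurableEmbedding_repr_symm_toLp]
  simp only [hfactor]
  rw [integral_fintype_prod_volume_eq_prod,
    Finset.prod_eq_single i₀ (fun i _ hi => ?_) (fun h => absurd (Finset.mem_univ i₀) h),
    Function.update_self, integral_indicator hs]
  rw [Function.update_of_ne hi]
  exact integral_gaussianPDFReal_eq_one _ hv

lemma gauss_map_inner_of_norm_eq_one (m : EuclideanSpace ℝ (Fin d)) {σ : ℝ} (hσ : σ ≠ 0)
    {u : EuclideanSpace ℝ (Fin d)} (hu : ‖u‖ = 1) :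
    (gauss d m σ).map (fun x => ⟪x, u⟫) = gaussianReal ⟪m, u⟫ (σ ^ 2).toNNReal := by
  have hu₀ : u ≠ 0 := by
    rintro rfl
    simp at hu
  have hd : 0 < d := by simpa using (Module.finrank_pos_iff_exists_ne_zero (R := ℝ)).mpr ⟨u, hu₀⟩
  obtain ⟨b, hb⟩ := OrthonormalBasis.exists_apply_eq (ι := Fin d) (by simp) hu ⟨0, hd⟩
  have hinner : ∀ x, ⟪x, u⟫ = b.repr x ⟨0, hd⟩ := fun x => by
    rw [b.repr_apply_apply, hb, real_inner_comm]
  simp only [hinner]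
  exact gauss_map_repr b m hσ _

lemma gauss_map_inner (m : EuclideanSpace ℝ (Fin d)) {σ : ℝ} (hσ : σ ≠ 0)
    {w : EuclideanSpace ℝ (Fin d)} (hw : w ≠ 0) :
    (gauss d m σ).map (fun x => ⟪x, w⟫) = gaussianReal ⟪m, w⟫ ((σ * ‖w‖) ^ 2).toNNReal := by
  have hw' : ‖w‖ ≠ 0 := norm_ne_zero_iff.mpr hw
  have hscale : ∀ x, ⟪x, w⟫ = ‖w‖ * ⟪x, ‖w‖⁻¹ • w⟫ := fun x => by
    rw [real_inner_smul_right, mul_inv_cancel_left₀ hw']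
  have hu : ‖‖w‖⁻¹ • w‖ = 1 := by rw [norm_smul, norm_inv, norm_norm, inv_mul_cancel₀ hw']
  have hcomp : (fun x => ⟪x, w⟫) = (‖w‖ * ·) ∘ fun x => ⟪x, ‖w‖⁻¹ • w⟫ := funext hscale
  rw [hcomp, ← Measure.map_map (by fun_prop) (by fun_prop),
    gauss_map_inner_of_norm_eq_one m hσ hu, gaussianReal_map_const_mul,
    ← hscale]
  congr 1
  ext
  simp [mul_pow, mul_comm, sq_nonneg, mul_nonneg]

lemma gauss_setOf_inner_le (m : EuclideanSpace ℝ (Fin d)) {σ : ℝ} (hσ : 0 < σ)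
    {w : EuclideanSpace ℝ (Fin d)} (hw : w ≠ 0) (c : ℝ) :
    gauss d m σ {x | ⟪x, w⟫ ≤ c} = ENNReal.ofReal (stdNormCDF ((c - ⟪m, w⟫) / (σ * ‖w‖))) := by
  rw [← gaussianReal_Iic_eq_ofReal_stdNormCDF (by positivity), ← gauss_map_inner m hσ.ne' hw,
    Measure.map_apply (by fun_prop) measurableSet_Iic]
  rfl

lemma gauss_setOf_le_inner (m : EuclideanSpace ℝ (Fin d)) {σ : ℝ} (hσ : 0 < σ)
    {w : EuclideanSpace ℝ (Fin d)} (hw : w ≠ 0) (c : ℝ) :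
    gauss d m σ {x | c ≤ ⟪x, w⟫} = ENNReal.ofReal (stdNormCDF ((⟪m, w⟫ - c) / (σ * ‖w‖))) := by
  have hneg : {x | c ≤ ⟪x, w⟫} = {x | ⟪x, -w⟫ ≤ -c} := by
    ext x
    simp [inner_neg_right]
  rw [hneg, gauss_setOf_inner_le m hσ (neg_ne_zero.mpr hw), inner_neg_right, norm_neg]
  ring_nf

lemma mul_gaussPdf_le_gaussPdf_iff {a σ : ℝ} (ha : 0 < a) (hσ : σ ≠ 0)
    (m₁ m₂ x : EuclideanSpace ℝ (Fin d)) :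
    a * gaussPdf d m₁ σ x ≤ gaussPdf d m₂ σ x ↔
      2 * σ ^ 2 * Real.log a ≤ ‖x - m₁‖ ^ 2 - ‖x - m₂‖ ^ 2 := by
  have hC : 0 < (2 * π * σ ^ 2) ^ (-(d : ℝ) / 2) := by positivity
  have h2σ : 0 < 2 * σ ^ 2 := by positivity
  rw [gaussPdf, gaussPdf, mul_left_comm, mul_le_mul_iff_right₀ hC, ← Real.exp_log ha,
    ← Real.exp_add, Real.exp_le_exp, Real.exp_log ha, ← sub_nonneg]
  rw [show -‖x - m₂‖ ^ 2 / (2 * σ ^ 2) - (Real.log a + -‖x - m₁‖ ^ 2 / (2 * σ ^ 2))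
      = (‖x - m₁‖ ^ 2 - ‖x - m₂‖ ^ 2 - 2 * σ ^ 2 * Real.log a) / (2 * σ ^ 2) by
    field_simp; ring, div_nonneg_iff]
  constructor
  · rintro (⟨h, -⟩ | ⟨-, h⟩) <;> linarith
  · intro h
    exact Or.inl ⟨by linarith, h2σ.le⟩

noncomputable def slabClassifier (w : EuclideanSpace ℝ (Fin d)) (a b : ℝ)
    (x : EuclideanSpace ℝ (Fin d)) : ℝ :=
  if a ≤ ⟪x, w⟫ ∧ ⟪x, w⟫ ≤ b then 1 else -1

lemma hMDA_eq_slabClassifier (μv : EuclideanSpace ℝ (Fin d)) {σ q : ℝ} (hσ : σ ≠ 0)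
    (hq₀ : 0 < q) (hq₁ : q < 1) :
    hMDA d μv σ q = slabClassifier μv (σ ^ 2 * Real.log q / 2)
      (2 * ‖μv‖ ^ 2 - σ ^ 2 * Real.log (1 - q) / 2) := by
  funext x
  have hneg : ‖x - -μv‖ ^ 2 - ‖x - μv‖ ^ 2 = 4 * ⟪x, μv⟫ := by
    rw [sub_neg_eq_add, norm_add_sq_real, norm_sub_sq_real]
    ring
  have hthree : ‖x - (3 : ℝ) • μv‖ ^ 2 - ‖x - μv‖ ^ 2 = 8 * ‖μv‖ ^ 2 - 4 * ⟪x, μv⟫ := by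
    rw [norm_sub_sq_real, norm_sub_sq_real, real_inner_smul_right, norm_smul, Real.norm_ofNat]
    ring
  unfold hMDA slabClassifier
  congr 1
  apply propext
  rw [mul_gaussPdf_le_gaussPdf_iff hq₀ hσ, mul_gaussPdf_le_gaussPdf_iff (sub_pos.mpr hq₁) hσ,
    hneg, hthree]
  constructor <;> rintro ⟨h₁, h₂⟩ <;> constructor <;> linarith

lemma measurable_slabClassifier (w : EuclideanSpace ℝ (Fin d)) (a b : ℝ) :
    Measurable (slabClassifier w a b) := by
  have hinner : Measurable fun x : EuclideanSpace ℝ (Fin d) => ⟪x, w⟫ := by fun_prop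
  exact Measurable.ite ((measurableSet_le measurable_const hinner).inter
    (measurableSet_le hinner measurable_const)) measurable_const measurable_const

lemma Dmix_apply_setOf_ne (μv : EuclideanSpace ℝ (Fin d)) (σ p : ℝ)
    {h : EuclideanSpace ℝ (Fin d) → ℝ} (hh : Measurable h) :
    Dmix d μv σ p {z | h z.1 ≠ z.2} =
      ENNReal.ofReal (1 / 2) * gauss d μv σ {x | h x ≠ 1}
        + ENNReal.ofReal (p / 2) * gauss d (-μv) σ {x | h x ≠ -1}
        + ENNReal.ofReal ((1 - p) / 2) * gauss d ((3 : ℝ) • μv) σ {x | h x ≠ -1} := by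
  have hS : MeasurableSet {z : EuclideanSpace ℝ (Fin d) × ℝ | h z.1 ≠ z.2} :=
    (measurableSet_eq_fun (hh.comp measurable_fst) measurable_snd).compl
  have hpair : ∀ y : ℝ, Measurable fun x : EuclideanSpace ℝ (Fin d) => (x, y) :=
    fun y => measurable_id.prodMk measurable_const
  simp only [Dmix, Measure.add_apply, Measure.smul_apply, Measure.map_apply (hpair _) hS,
    smul_eq_mul]
  rfl

lemma Dmix_slabClassifier_error_le (μv w : EuclideanSpace ℝ (Fin d)) (a b σ p : ℝ) :
    Dmix d μv σ p {z | slabClassifier w a b z.1 ≠ z.2} ≤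
      ENNReal.ofReal (1 / 2) * (gauss d μv σ {x | ⟪x, w⟫ ≤ a} + gauss d μv σ {x | b ≤ ⟪x, w⟫})
        + ENNReal.ofReal (p / 2) * gauss d (-μv) σ {x | a ≤ ⟪x, w⟫}
        + ENNReal.ofReal ((1 - p) / 2) * gauss d ((3 : ℝ) • μv) σ {x | ⟪x, w⟫ ≤ b} := by
  have hslab : ∀ x, slabClassifier w a b x ≠ -1 → a ≤ ⟪x, w⟫ ∧ ⟪x, w⟫ ≤ b := fun x hx => by
    unfold slabClassifier at hx
    split_ifs at hx with h
    exacts [h, absurd rfl hx]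
  rw [Dmix_apply_setOf_ne μv σ p (measurable_slabClassifier w a b)]
  gcongr
  · refine (measure_mono fun x hx => ?_).trans (measure_union_le _ _)
    by_contra hout
    simp only [mem_union, mem_ofPred_eq, not_or, not_le] at hout
    exact hx (if_pos ⟨hout.1.le, hout.2.le⟩)
  · exact fun hx => (hslab x hx).1
  · exact fun hx => (hslab x hx).2

lemma two_mul_Dmix_hMDA_error_le {μv : EuclideanSpace ℝ (Fin d)} (hμ : μv ≠ 0) {σ p q : ℝ}
    (hσ : 0 < σ) (hp₀ : 0 ≤ p) (hp₁ : p ≤ 1) (hq₀ : 0 < q) (hq₁ : q < 1) :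
    2 * (Dmix d μv σ p {z | hMDA d μv σ q z.1 ≠ z.2}).toReal ≤
      stdNormCDF (-(‖μv‖ / σ) + Real.log q / (2 * (‖μv‖ / σ)))
        + stdNormCDF (-(‖μv‖ / σ) + Real.log (1 - q) / (2 * (‖μv‖ / σ)))
        + p * stdNormCDF (-(‖μv‖ / σ) - Real.log q / (2 * (‖μv‖ / σ)))
        + (1 - p) * stdNormCDF (-(‖μv‖ / σ) - Real.log (1 - q) / (2 * (‖μv‖ / σ))) := by
  have hN : ‖μv‖ ≠ 0 := norm_ne_zero_iff.mpr hμ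
  have h := Dmix_slabClassifier_error_le μv μv (σ ^ 2 * Real.log q / 2)
    (2 * ‖μv‖ ^ 2 - σ ^ 2 * Real.log (1 - q) / 2) σ p
  rw [← hMDA_eq_slabClassifier μv hσ.ne' hq₀ hq₁, gauss_setOf_inner_le _ hσ hμ,
    gauss_setOf_le_inner _ hσ hμ, gauss_setOf_le_inner _ hσ hμ, gauss_setOf_inner_le _ hσ hμ,
    inner_neg_left, real_inner_smul_left, real_inner_self_eq_norm_sq] at h
  have hA : (σ ^ 2 * Real.log q / 2 - ‖μv‖ ^ 2) / (σ * ‖μv‖)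
      = -(‖μv‖ / σ) + Real.log q / (2 * (‖μv‖ / σ)) := by field_simp; ring
  have hB : (‖μv‖ ^ 2 - (2 * ‖μv‖ ^ 2 - σ ^ 2 * Real.log (1 - q) / 2)) / (σ * ‖μv‖)
      = -(‖μv‖ / σ) + Real.log (1 - q) / (2 * (‖μv‖ / σ)) := by field_simp; ring
  have hC : (-‖μv‖ ^ 2 - σ ^ 2 * Real.log q / 2) / (σ * ‖μv‖)
      = -(‖μv‖ / σ) - Real.log q / (2 * (‖μv‖ / σ)) := by field_simp
  have hD : (2 * ‖μv‖ ^ 2 - σ ^ 2 * Real.log (1 - q) / 2 - 3 * ‖μv‖ ^ 2) / (σ * ‖μv‖)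
      = -(‖μv‖ / σ) - Real.log (1 - q) / (2 * (‖μv‖ / σ)) := by field_simp; ring
  rw [hA, hB, hC, hD] at h
  exact two_mul_toReal_le_of_le_mix (stdNormCDF_nonneg _) (stdNormCDF_nonneg _)
    (stdNormCDF_nonneg _) (stdNormCDF_nonneg _) hp₀ hp₁ h

end

theorem mda_error_train_q_test_p_general (d : ℕ)
    (μv : EuclideanSpace ℝ (Fin d)) (hμ : μv ≠ 0) (σ p t q : ℝ) (hσ : 0 < σ)
    (hp1 : 1 / 2 < p) (hp2 : p < 1) (ht : 2 < t) (hq : q = 1 - 1 / t) :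
    2 * ((Dmix d μv σ p) {z | hMDA d μv σ q z.1 ≠ z.2}).toReal ≤
      stdNormCDF (-(‖μv‖ / σ) + Real.log (1 - 1 / t) / (2 * (‖μv‖ / σ)))
        + stdNormCDF (-(‖μv‖ / σ) - Real.log t / (2 * (‖μv‖ / σ)))
        + p * stdNormCDF (-(‖μv‖ / σ) - Real.log (1 - 1 / t) / (2 * (‖μv‖ / σ)))
        + (1 - p) * stdNormCDF (-(‖μv‖ / σ) + Real.log t / (2 * (‖μv‖ / σ))) := by
  have hq₀ : 0 < q := by linarith [one_div_lt_one_div_of_lt two_pos ht]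
  have hq₁ : q < 1 := by linarith [one_div_pos.mpr (two_pos.trans ht)]
  have hlog : Real.log (1 - q) = -Real.log t := by
    rw [hq, sub_sub_cancel, one_div, Real.log_inv]
  have h := two_mul_Dmix_hMDA_error_le hμ hσ (by linarith) hp2.le hq₀ hq₁
  rw [hlog, neg_div, sub_neg_eq_add, ← sub_eq_add_neg] at h
  rwa [← hq]

/-- Error bound for the ideal MDA classifier built with mixture weight
`q = 1 − 1/t` but evaluated on the distribution `D_p` (training on the
shortened-tail distribution, testing on the original one). -/
theorem mda_error_train_q_test_p (d : ℕ) (hd : 1 ≤ d)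
    (μv : EuclideanSpace ℝ (Fin d)) (hμ : μv ≠ 0) (σ p t q : ℝ) (hσ : 0 < σ)
    (hp1 : 1 / 2 < p) (hp2 : p < 1) (ht : 2 < t) (hq : q = 1 - 1 / t) :
    2 * ((Dmix d μv σ p) {z | hMDA d μv σ q z.1 ≠ z.2}).toReal ≤
      stdNormCDF (-(‖μv‖ / σ) + Real.log (1 - 1 / t) / (2 * (‖μv‖ / σ)))
        + stdNormCDF (-(‖μv‖ / σ) - Real.log t / (2 * (‖μv‖ / σ)))
        + p * stdNormCDF (-(‖μv‖ / σ) - Real.log (1 - 1 / t) / (2 * (‖μv‖ / σ)))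
        + (1 - p) * stdNormCDF (-(‖μv‖ / σ) + Real.log t / (2 * (‖μv‖ / σ))) :=
  mda_error_train_q_test_p_general d μv hμ σ p t q hσ hp1 hp2 ht hq
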